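/- arXiv:1505.06378 — 4 statements merged into one kernel-verified Lean document; each statement's English description precedes it below -/
import Mathlib

section
/- (Monotonicity constraints are sufficient) Let f(x) = ∑_{v∈{0,1}^D} θ(v) φ_v(x) be the multilinear interpolation of lattice parameters θ on [0,1]^D, and fix a coordinate d. If for every pair of vertices v, v' with v[d]=0, v'[d]=1, and v[m]=v'[m] for all m≠d we have θ(v') ≥ θ(v), then f is monotonically nondecreasing in coordinate d: for any x, x' ∈ [0,1]^D with x'[d] ≥ x[d] and x'[m] = x[m] for m ≠ d, f(x') ≥ f(x). -/
/-- Multilinear interpolation weight of vertex `v ∈ {0,1}^D` at point `x`. -/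
def mlWeight (D : ℕ) (x : Fin D → ℝ) (v : Fin D → Bool) : ℝ :=
  ∏ m, if v m then x m else 1 - x m

lemma mlWeight_split (D : ℕ) (d : Fin D) (x : Fin D → ℝ) (v : Fin D → Bool) :
    mlWeight D x v = (if v d then x d else 1 - x d) *
      ∏ j : {j : Fin D // j ≠ d}, (if v j then x (j:Fin D) else 1 - x j) := by
  unfold mlWeight
  rw [← Finset.mul_prod_erase Finset.univ _ (Finset.mem_univ d)]
  congr 1
  rw [Finset.prod_subtype (Finset.univ.erase d) (p := fun j => j ≠ d) (by simp)]

theorem stmt_5 (D : ℕ) (θ : (Fin D → Bool) → ℝ) (d : Fin D)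
    (hθ : ∀ v v' : Fin D → Bool, v d = false → v' d = true →
      (∀ m, m ≠ d → v m = v' m) → θ v ≤ θ v')
    (x x' : Fin D → ℝ)
    (hx : ∀ m, x m ∈ Set.Icc (0:ℝ) 1) (hx' : ∀ m, x' m ∈ Set.Icc (0:ℝ) 1)
    (hd : x d ≤ x' d) (hm : ∀ m, m ≠ d → x m = x' m) :
    ∑ v : Fin D → Bool, θ v * mlWeight D x v ≤
      ∑ v : Fin D → Bool, θ v * mlWeight D x' v := by
  classical
  set e := Equiv.funSplitAt d Bool with he
  have hsum : ∀ y : Fin D → ℝ,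
      ∑ v : Fin D → Bool, θ v * mlWeight D y v
        = ∑ h : {j : Fin D // j ≠ d} → Bool,
            ((θ (e.symm (true, h)) * y d + θ (e.symm (false, h)) * (1 - y d))
              * ∏ j : {j : Fin D // j ≠ d}, (if h j then y (j:Fin D) else 1 - y j)) := by
    intro y
    rw [← e.symm.sum_comp (fun v => θ v * mlWeight D y v), Fintype.sum_prod_type,
      Fintype.sum_bool, ← Finset.sum_add_distrib]
    refine Finset.sum_congr rfl fun h _ => ?_
    have h1 : ∀ b, e.symm (b, h) d = b := by intro b; simp [he]
    have h2 : ∀ b (j : {j : Fin D // j ≠ d}), e.symm (b, h) j = h j := by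
      intro b j; simp [he, j.2]
    rw [mlWeight_split D d y (e.symm (true, h)), mlWeight_split D d y (e.symm (false, h))]
    simp only [h1, h2]
    norm_num
    ring
  rw [hsum x, hsum x']
  refine Finset.sum_le_sum fun h _ => ?_
  have hprod : ∏ j : {j : Fin D // j ≠ d}, (if h j then x' (j:Fin D) else 1 - x' j)
      = ∏ j : {j : Fin D // j ≠ d}, (if h j then x (j:Fin D) else 1 - x j) := by
    refine Finset.prod_congr rfl fun j _ => ?_
    rw [hm j j.2]
  rw [hprod]
  have hP : (0:ℝ) ≤ ∏ j : {j : Fin D // j ≠ d}, (if h j then x (j:Fin D) else 1 - x j) := by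
    refine Finset.prod_nonneg fun j _ => ?_
    have := hx j
    split <;> simp_all <;> linarith [this.1, this.2]
  have hθ01 : θ (e.symm (false, h)) ≤ θ (e.symm (true, h)) := by
    refine hθ _ _ (by simp [he]) (by simp [he]) fun m hmd => ?_
    simp [he, hmd]
  nlinarith [mul_nonneg (mul_nonneg (sub_nonneg.2 hθ01) (sub_nonneg.2 hd)) hP]
end

section
/- (Monotonicity for simplex interpolation) Let θ : {0,1}^D → ℝ satisfy θ(v') ≥ θ(v) for every pair of adjacent vertices v, v' with v[d]=0, v'[d]=1, v[m]=v'[m] for m≠d. Then the simplex-interpolated function f(x) = ∑_{k=0}^D ψ_k(x) θ(u_k(x)) (where ψ_k and u_k are the simplex interpolation weights and vertices for x) is monotonically nondecreasing in coordinate d on [0,1]^D. -/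
/-!
For a fixed sorting permutation `π`, Abel summation turns the interpolant into
`θ(u₀) + ∑ₘ xₘ (θ(u_{π⁻¹m+1}) - θ(u_{π⁻¹m}))`, an affine function of `x` in which the
coefficient of `x_d` is the increment of `θ` along an edge in direction `d`, hence nonnegative.
Raising `x_d` without crossing the value of any other coordinate preserves a common sorting
permutation, so `f` increases along such a step; a general increase of `x_d` is cut into finitely
many such steps at the values of the other coordinates.
-/

/-- Sorted coordinate sequence with sentinels: `sSeq D x π 0 = 1`,
`sSeq D x π k = x (π (k-1))` for `1 ≤ k ≤ D`, and `0` for `k > D`. -/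
def sSeq (D : ℕ) (x : Fin D → ℝ) (π : Equiv.Perm (Fin D)) (k : ℕ) : ℝ :=
  if h : 1 ≤ k ∧ k ≤ D then x (π ⟨k - 1, by omega⟩) else if k = 0 then 1 else 0

/-- The `k`-th vertex of the simplex associated with sorting permutation `π`:
ones in the first `k` sorted coordinates. -/
def simplexVertex (D : ℕ) (π : Equiv.Perm (Fin D)) (k : ℕ) : Fin D → Bool :=
  fun i => decide ((π.symm i : ℕ) < k)

open Finset Function

theorem Monovary.exists_perm_antitone {α β : Type*} [LinearOrder α] [LinearOrder β] {n : ℕ}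
    {x : Fin n → α} {y : Fin n → β} (h : Monovary y x) :
    ∃ π : Equiv.Perm (Fin n), Antitone (x ∘ π) ∧ Antitone (y ∘ π) := by
  set key : Fin n → αᵒᵈ ×ₗ βᵒᵈ := fun i => toLex (OrderDual.toDual (x i), OrderDual.toDual (y i))
  have hkey {i j : Fin n} (hij : key i ≤ key j) : x j < x i ∨ x j = x i ∧ y j ≤ y i :=
    (Prod.Lex.toLex_le_toLex.1 hij).imp id fun h => ⟨h.1.symm, h.2⟩
  refine ⟨Tuple.sort key, fun i j hij => ?_, fun i j hij => ?_⟩ <;>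
    rcases hkey (Tuple.monotone_sort key hij) with hx | ⟨hx, hy⟩
  exacts [hx.le, hx.le, h hx, hy]

theorem monovary_update_update {ι α : Type*} [DecidableEq ι] [LinearOrder α] {x : ι → α}
    {d : ι} {a b : α} (hab : a ≤ b) (hx : ∀ m ≠ d, x m ∉ Set.Ioo a b) :
    Monovary (update x d b) (update x d a) := by
  intro i j hij
  simp only [update_apply] at hij ⊢
  split_ifs at hij ⊢ with hi hj hj
  · exact absurd hij (lt_irrefl _)
  · exact not_lt.1 fun h => hx j hj ⟨hij, h⟩
  · exact (hij.trans_le hab).le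
  · exact hij.le

theorem Finset.sum_range_succ_sub_mul {R : Type*} [CommRing R] (s c : ℕ → R) (n : ℕ) :
    ∑ k ∈ range (n + 1), (s k - s (k + 1)) * c k
      = s 0 * c 0 - s (n + 1) * c n + ∑ k ∈ range n, s (k + 1) * (c (k + 1) - c k) := by
  induction n with
  | zero => rw [sum_range_one, sum_range_zero]; ring
  | succ n ih => rw [sum_range_succ, ih, sum_range_succ]; ring

theorem monotoneOn_of_le_of_forall_notMem_Ioo {α β : Type*} [LinearOrder α] [Preorder β]
    {g : α → β} {s : Set α} (hs : s.OrdConnected) (T : Finset α)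
    (h : ∀ a ∈ s, ∀ b ∈ s, a ≤ b → (∀ t ∈ T, t ∉ Set.Ioo a b) → g a ≤ g b) : MonotoneOn g s := by
  classical
  induction T using Finset.induction_on with
  | empty => exact fun a ha b hb hab => h a ha b hb hab (by simp)
  | insert t T _ ih =>
    refine ih fun a ha b hb hab hT => ?_
    by_cases ht : t ∈ Set.Ioo a b
    · have hts : t ∈ s := hs.out ha hb (Set.Ioo_subset_Icc_self ht)
      have hTt : ∀ t' ∈ insert t T, t' ∉ Set.Ioo a t ∧ t' ∉ Set.Ioo t b := by
        refine forall_mem_insert _ _ _ |>.2 ⟨by simp, fun t' ht' => ⟨?_, ?_⟩⟩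
        exacts [fun h' => hT t' ht' (Set.Ioo_subset_Ioo_right ht.2.le h'),
          fun h' => hT t' ht' (Set.Ioo_subset_Ioo_left ht.1.le h')]
      exact (h a ha t hts ht.1.le fun t' ht' => (hTt t' ht').1).trans
        (h t hts b hb ht.2.le fun t' ht' => (hTt t' ht').2)
    · exact h a ha b hb hab (forall_mem_insert _ _ _ |>.2 ⟨ht, hT⟩)

section SimplexInterpolation

variable {D : ℕ}

def simplexInterp (D : ℕ) (θ : (Fin D → Bool) → ℝ) (π : Equiv.Perm (Fin D)) (x : Fin D → ℝ) : ℝ :=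
  ∑ k ∈ range (D + 1), (sSeq D x π k - sSeq D x π (k + 1)) * θ (simplexVertex D π k)

theorem simplexInterp_eq_add_sum (θ : (Fin D → Bool) → ℝ) (π : Equiv.Perm (Fin D))
    (x : Fin D → ℝ) : simplexInterp D θ π x = θ (simplexVertex D π 0) +
      ∑ m, x m * (θ (simplexVertex D π (π.symm m + 1)) - θ (simplexVertex D π (π.symm m))) := by
  rw [simplexInterp, sum_range_succ_sub_mul, ← Fin.sum_univ_eq_sum_range
    (fun k => sSeq D x π (k + 1) * _)]
  conv_rhs => rw [← Equiv.sum_comp π]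
  simp [sSeq]

theorem apply_simplexVertex_symm_le_apply_succ {θ : (Fin D → Bool) → ℝ} {d : Fin D}
    (hθ : ∀ v v' : Fin D → Bool, v d = false → v' d = true →
      (∀ m, m ≠ d → v m = v' m) → θ v ≤ θ v') (π : Equiv.Perm (Fin D)) :
    θ (simplexVertex D π (π.symm d)) ≤ θ (simplexVertex D π (π.symm d + 1)) := by
  refine hθ _ _ (by simp [simplexVertex]) (by simp [simplexVertex]) fun m hm => ?_
  have : (π.symm m : ℕ) ≠ π.symm d := fun h => hm (π.symm.injective (Fin.ext h))
  simp only [simplexVertex, decide_eq_decide]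
  omega

theorem simplexInterp_le_simplexInterp {θ : (Fin D → Bool) → ℝ} {d : Fin D}
    (hθ : ∀ v v' : Fin D → Bool, v d = false → v' d = true →
      (∀ m, m ≠ d → v m = v' m) → θ v ≤ θ v') (π : Equiv.Perm (Fin D)) {x x' : Fin D → ℝ}
    (hd : x d ≤ x' d) (hm : ∀ m ≠ d, x m = x' m) :
    simplexInterp D θ π x ≤ simplexInterp D θ π x' := by
  rw [simplexInterp_eq_add_sum, simplexInterp_eq_add_sum]
  gcongr _ + ∑ m, ?_ with m
  rcases eq_or_ne m d with rfl | h
  · exact mul_le_mul_of_nonneg_right hd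
      (sub_nonneg.2 (apply_simplexVertex_symm_le_apply_succ hθ π))
  · rw [hm m h]

end SimplexInterpolation

theorem stmt_14 (D : ℕ) (θ : (Fin D → Bool) → ℝ) (d : Fin D)
    (hθ : ∀ v v' : Fin D → Bool, v d = false → v' d = true →
      (∀ m, m ≠ d → v m = v' m) → θ v ≤ θ v')
    (f : (Fin D → ℝ) → ℝ)
    (hf : ∀ x : Fin D → ℝ, (∀ i, x i ∈ Set.Icc (0:ℝ) 1) →
      ∀ π : Equiv.Perm (Fin D), (∀ i j : Fin D, i ≤ j → x (π j) ≤ x (π i)) →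
        f x = ∑ k ∈ Finset.range (D + 1),
          (sSeq D x π k - sSeq D x π (k + 1)) * θ (simplexVertex D π k)) :
    ∀ x x' : Fin D → ℝ,
      (∀ i, x i ∈ Set.Icc (0:ℝ) 1) → (∀ i, x' i ∈ Set.Icc (0:ℝ) 1) →
      x d ≤ x' d → (∀ m, m ≠ d → x m = x' m) → f x ≤ f x' := by
  intro x x' hx hx' hd hm
  have hmem {t : ℝ} (ht : t ∈ Set.Icc 0 1) (i : Fin D) : update x d t i ∈ Set.Icc 0 1 := by
    rcases eq_or_ne i d with rfl | h
    · simpa using ht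
    · simpa [h] using hx i
  have hstep : ∀ a ∈ Set.Icc (0 : ℝ) 1, ∀ b ∈ Set.Icc (0 : ℝ) 1, a ≤ b →
      (∀ t ∈ univ.image x, t ∉ Set.Ioo a b) → f (update x d a) ≤ f (update x d b) := by
    intro a ha b hb hab hT
    obtain ⟨π, hπa, hπb⟩ := (monovary_update_update hab fun m _ =>
      hT (x m) (mem_image_of_mem x (mem_univ m))).exists_perm_antitone
    rw [hf _ (hmem ha) π fun i j hij => @hπa i j hij,
      hf _ (hmem hb) π fun i j hij => @hπb i j hij]
    exact simplexInterp_le_simplexInterp hθ π (by simp [hab]) fun m hm => by simp [hm]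
  have hmono := monotoneOn_of_le_of_forall_notMem_Ioo Set.ordConnected_Icc _ hstep
  simpa [(update_eq_iff.2 ⟨rfl, hm⟩ : update x d (x' d) = x')] using hmono (hx d) (hx' d) hd
end

section
/- Simplex interpolation is well-defined on simplex boundaries: if x ∈ [0,1]^D admits two sorting permutations π and σ (both making the coordinates of x nonincreasing), then the simplex interpolation values computed with π and σ agree: ∑_k ψ_k^π(x) θ(u_k^π) = ∑_k ψ_k^σ(x) θ(u_k^σ) for any θ : {0,1}^D → ℝ. -/
/-!
Two sorting permutations of `x` can only differ inside blocks of equal coordinates, so the sorted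
sequence `x ∘ π`, and with it every weight `ψ_k`, does not depend on the choice of `π`
(`Tuple.unique_antitone`). When `ψ_k ≠ 0`, the vertex `u_k` is either `0`, `1`, or the set
of coordinates strictly above the next sorted value `sSeq D x π (k + 1)`, which again depends
only on the sorted values; the terms with `ψ_k = 0` vanish on both sides.
-/

section

variable {D : ℕ} {x : Fin D → ℝ}

lemma sSeq_congr {π σ : Equiv.Perm (Fin D)} (h : x ∘ π = x ∘ σ) : sSeq D x π = sSeq D x σ := by
  have h' (i : Fin D) : x (π i) = x (σ i) := congrFun h i
  funext k
  simp only [sSeq, h']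

lemma sSeq_succ (π : Equiv.Perm (Fin D)) {k : ℕ} (hk : k < D) :
    sSeq D x π (k + 1) = x (π ⟨k, hk⟩) :=
  dif_pos ⟨by omega, hk⟩

lemma simplexVertex_zero (π : Equiv.Perm (Fin D)) : simplexVertex D π 0 = fun _ => false := by
  funext i
  simp [simplexVertex]

lemma simplexVertex_self (π : Equiv.Perm (Fin D)) : simplexVertex D π D = fun _ => true := by
  funext i
  simp [simplexVertex]

lemma simplexVertex_eq_of_lt_sSeq {π : Equiv.Perm (Fin D)} (hπ : Antitone (x ∘ π)) {k : ℕ}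
    (hk0 : 0 < k) (hkD : k < D) (hgap : sSeq D x π (k + 1) ≠ sSeq D x π k) :
    simplexVertex D π k = fun i => decide (sSeq D x π (k + 1) < x i) := by
  obtain ⟨j, rfl⟩ : ∃ j, k = j + 1 := ⟨k - 1, by omega⟩
  rw [sSeq_succ π hkD] at hgap ⊢
  rw [sSeq_succ π (by omega)] at hgap
  have hlt : x (π ⟨j + 1, hkD⟩) < x (π ⟨j, by omega⟩) :=
    (hπ (Fin.le_iff_val_le_val.mpr (by dsimp only; omega))).lt_of_ne hgap
  funext i
  obtain ⟨m, rfl⟩ := π.surjective i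
  simp only [simplexVertex, Equiv.symm_apply_apply, decide_eq_decide]
  constructor
  · intro hm
    exact hlt.trans_le (hπ (Fin.le_iff_val_le_val.mpr (by dsimp only; omega)))
  · intro hm
    by_contra hm'
    exact (hπ (Fin.le_iff_val_le_val.mpr (by dsimp only; omega))).not_gt hm

lemma simplexVertex_eq_of_sSeq_ne {π σ : Equiv.Perm (Fin D)} (hπ : Antitone (x ∘ π))
    (hσ : Antitone (x ∘ σ)) {k : ℕ} (hk : k ≤ D) (hgap : sSeq D x π (k + 1) ≠ sSeq D x π k) :
    simplexVertex D π k = simplexVertex D σ k := by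
  have hs := sSeq_congr (Tuple.unique_antitone hπ hσ)
  rcases Nat.eq_zero_or_pos k with rfl | hk0
  · rw [simplexVertex_zero, simplexVertex_zero]
  rcases hk.eq_or_lt with rfl | hkD
  · rw [simplexVertex_self, simplexVertex_self]
  rw [simplexVertex_eq_of_lt_sSeq hπ hk0 hkD hgap,
    simplexVertex_eq_of_lt_sSeq hσ hk0 hkD (hs ▸ hgap), hs]

end

theorem stmt_16_general (D : ℕ) (x : Fin D → ℝ)
    (π σ : Equiv.Perm (Fin D))
    (hπ : ∀ i j : Fin D, i ≤ j → x (π j) ≤ x (π i))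
    (hσ : ∀ i j : Fin D, i ≤ j → x (σ j) ≤ x (σ i))
    (θ : (Fin D → Bool) → ℝ) :
    ∑ k ∈ Finset.range (D + 1),
        (sSeq D x π k - sSeq D x π (k + 1)) * θ (simplexVertex D π k)
      = ∑ k ∈ Finset.range (D + 1),
        (sSeq D x σ k - sSeq D x σ (k + 1)) * θ (simplexVertex D σ k) := by
  have hπ' : Antitone (x ∘ π) := fun i j hij => hπ i j hij
  have hσ' : Antitone (x ∘ σ) := fun i j hij => hσ i j hij
  have hs := sSeq_congr (Tuple.unique_antitone hπ' hσ')
  refine Finset.sum_congr rfl fun k hk => ?_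
  by_cases hgap : sSeq D x π (k + 1) = sSeq D x π k
  · rw [← hs, hgap, sub_self, zero_mul, zero_mul]
  · rw [simplexVertex_eq_of_sSeq_ne hπ' hσ' (Finset.mem_range_succ_iff.mp hk) hgap, hs]

theorem stmt_16 (D : ℕ) (x : Fin D → ℝ) (hx : ∀ i, x i ∈ Set.Icc (0:ℝ) 1)
    (π σ : Equiv.Perm (Fin D))
    (hπ : ∀ i j : Fin D, i ≤ j → x (π j) ≤ x (π i))
    (hσ : ∀ i j : Fin D, i ≤ j → x (σ j) ≤ x (σ i))
    (θ : (Fin D → Bool) → ℝ) :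
    ∑ k ∈ Finset.range (D + 1),
        (sSeq D x π k - sSeq D x π (k + 1)) * θ (simplexVertex D π k)
      = ∑ k ∈ Finset.range (D + 1),
        (sSeq D x σ k - sSeq D x σ (k + 1)) * θ (simplexVertex D σ k) :=
  stmt_16_general D x π σ hπ hσ θ
end

section
/- The multilinear interpolation weights are the maximum-entropy linear interpolation weights: among all probability vectors w over the 2^D vertices of the unit hypercube satisfying ∑_v w_v v = x (for fixed x ∈ (0,1)^D), the product weights φ_v(x) = ∏_d x[d]^{v[d]}(1−x[d])^{1−v[d]} uniquely maximize the entropy −∑_v w_v log w_v. -/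
lemma sum_prod_bool (D : ℕ) (g : Fin D → Bool → ℝ) :
    ∑ v : Fin D → Bool, ∏ m, g m (v m) = ∏ m, (g m false + g m true) := by
  classical
  have h := Finset.prod_univ_sum (κ := fun _ : Fin D => Bool)
    (t := fun _ => (Finset.univ : Finset Bool)) (f := fun m b => g m b)
  rw [Fintype.piFinset_univ] at h
  rw [← h]
  refine Finset.prod_congr rfl fun m _ => ?_
  simp [Fintype.sum_bool]
  ring

lemma gibbs_le {w p : ℝ} (hp : 0 < p) (hw : 0 ≤ w) :
    w - p ≤ w * Real.log w - w * Real.log p := by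
  rcases eq_or_lt_of_le hw with h | h
  · simp [← h]; linarith
  · have h1 : Real.log (p / w) ≤ p / w - 1 := Real.log_le_sub_one_of_pos (by positivity)
    have h2 : Real.log (p / w) = Real.log p - Real.log w := Real.log_div hp.ne' h.ne'
    have h3 : w * (p / w - 1) = p - w := by field_simp
    nlinarith [mul_le_mul_of_nonneg_left h1 h.le]

lemma gibbs_lt {w p : ℝ} (hp : 0 < p) (hw : 0 ≤ w) (hne : w ≠ p) :
    w - p < w * Real.log w - w * Real.log p := by
  rcases eq_or_lt_of_le hw with h | h
  · simp [← h]; linarith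
  · have hne1 : p / w ≠ 1 := by
      intro hh
      apply hne
      field_simp at hh
      linarith
    have h1 : Real.log (p / w) < p / w - 1 := Real.log_lt_sub_one_of_pos (by positivity) hne1
    have h2 : Real.log (p / w) = Real.log p - Real.log w := Real.log_div hp.ne' h.ne'
    have h3 : w * (p / w - 1) = p - w := by field_simp
    nlinarith [mul_lt_mul_of_pos_left h1 h]

lemma logsum (D : ℕ) (x : Fin D → ℝ) (hx : ∀ i, x i ∈ Set.Ioo (0:ℝ) 1)
    (w : (Fin D → Bool) → ℝ) (hw1 : ∑ v : Fin D → Bool, w v = 1)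
    (hwm : ∀ d : Fin D, ∑ v : Fin D → Bool, w v * (if v d then (1:ℝ) else 0) = x d) :
    ∑ v : Fin D → Bool, w v * Real.log (mlWeight D x v)
      = ∑ d, (x d * Real.log (x d) + (1 - x d) * Real.log (1 - x d)) := by
  have hlog : ∀ v : Fin D → Bool, Real.log (mlWeight D x v)
      = ∑ m, (if v m then Real.log (x m) else Real.log (1 - x m)) := by
    intro v
    unfold mlWeight
    rw [Real.log_prod]
    · exact Finset.sum_congr rfl fun m _ => by split <;> rfl
    · intro m _
      split
      · exact (hx m).1.ne'
      · have := (hx m).2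
        exact (show (0:ℝ) < 1 - x m by linarith).ne'
  calc ∑ v : Fin D → Bool, w v * Real.log (mlWeight D x v)
      = ∑ v : Fin D → Bool, ∑ m, w v * (if v m then Real.log (x m) else Real.log (1 - x m)) := by
        refine Finset.sum_congr rfl fun v _ => ?_
        rw [hlog, Finset.mul_sum]
    _ = ∑ m, ∑ v : Fin D → Bool, w v * (if v m then Real.log (x m) else Real.log (1 - x m)) :=
        Finset.sum_comm
    _ = ∑ d, (x d * Real.log (x d) + (1 - x d) * Real.log (1 - x d)) := by
        refine Finset.sum_congr rfl fun d _ => ?_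
        have key : ∀ v : Fin D → Bool,
            w v * (if v d then Real.log (x d) else Real.log (1 - x d))
            = w v * (if v d then (1:ℝ) else 0) * (Real.log (x d) - Real.log (1 - x d))
              + w v * Real.log (1 - x d) := by
          intro v; split <;> ring
        simp_rw [key]
        rw [Finset.sum_add_distrib, ← Finset.sum_mul, ← Finset.sum_mul, hwm d, hw1]
        ring

lemma ml_pos (D : ℕ) (x : Fin D → ℝ) (hx : ∀ i, x i ∈ Set.Ioo (0:ℝ) 1)
    (v : Fin D → Bool) : 0 < mlWeight D x v := by
  unfold mlWeight
  apply Finset.prod_pos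
  intro m _
  split
  · exact (hx m).1
  · have := (hx m).2; linarith

theorem stmt_18 (D : ℕ) (x : Fin D → ℝ) (hx : ∀ i, x i ∈ Set.Ioo (0:ℝ) 1) :
    ((∀ v, 0 ≤ mlWeight D x v) ∧ (∑ v : Fin D → Bool, mlWeight D x v = 1) ∧
      (∀ d : Fin D,
        ∑ v : Fin D → Bool, mlWeight D x v * (if v d then (1:ℝ) else 0) = x d)) ∧
    (∀ w : (Fin D → Bool) → ℝ,
      (∀ v, 0 ≤ w v) → (∑ v : Fin D → Bool, w v = 1) →
      (∀ d : Fin D, ∑ v : Fin D → Bool, w v * (if v d then (1:ℝ) else 0) = x d) →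
      w ≠ mlWeight D x →
      (-∑ v : Fin D → Bool, w v * Real.log (w v)) <
        (-∑ v : Fin D → Bool, mlWeight D x v * Real.log (mlWeight D x v))) := by
  have hpos := ml_pos D x hx
  have hsum1 : ∑ v : Fin D → Bool, mlWeight D x v = 1 := by
    unfold mlWeight
    have h := sum_prod_bool D (fun m b => if b then x m else 1 - x m)
    simp only at h
    rw [h]
    simp
  have hmom : ∀ d : Fin D,
      ∑ v : Fin D → Bool, mlWeight D x v * (if v d then (1:ℝ) else 0) = x d := by
    intro d
    have key : ∀ v : Fin D → Bool, mlWeight D x v * (if v d then (1:ℝ) else 0)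
        = ∏ m, ((if v m then x m else 1 - x m) * (if m = d then (if v m then (1:ℝ) else 0) else 1)) := by
      intro v
      rw [Finset.prod_mul_distrib]
      unfold mlWeight
      congr 1
      rw [Finset.prod_ite_eq' Finset.univ d (fun m => if v m then (1:ℝ) else 0)]
      simp
    simp_rw [key]
    have h := sum_prod_bool D
      (fun m b => (if b then x m else 1 - x m) * (if m = d then (if b then (1:ℝ) else 0) else 1))
    rw [h]
    have : ∀ m : Fin D,
        ((if (false:Bool) then x m else 1 - x m) * (if m = d then (if (false:Bool) then (1:ℝ) else 0) else 1))
        + ((if (true:Bool) then x m else 1 - x m) * (if m = d then (if (true:Bool) then (1:ℝ) else 0) else 1))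
        = if m = d then x m else 1 := by
      intro m; by_cases h : m = d <;> simp [h]
    trans (∏ m, if m = d then x m else (1:ℝ))
    · exact Finset.prod_congr rfl fun m _ => this m
    · rw [Finset.prod_ite_eq' Finset.univ d (fun m => x m)]
      simp
  refine ⟨⟨fun v => (hpos v).le, hsum1, hmom⟩, ?_⟩
  intro w hw0 hw1 hwm hne
  have hE1 := logsum D x hx w hw1 hwm
  have hE2 := logsum D x hx (mlWeight D x) hsum1 hmom
  obtain ⟨v0, hv0⟩ := Function.ne_iff.mp hne
  have hlt : ∑ v : Fin D → Bool, (w v - mlWeight D x v)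
      < ∑ v : Fin D → Bool, (w v * Real.log (w v) - w v * Real.log (mlWeight D x v)) := by
    apply Finset.sum_lt_sum
    · exact fun v _ => gibbs_le (hpos v) (hw0 v)
    · exact ⟨v0, Finset.mem_univ v0, gibbs_lt (hpos v0) (hw0 v0) hv0⟩
  rw [Finset.sum_sub_distrib, Finset.sum_sub_distrib, hw1, hsum1, hE1] at hlt
  linarith [hlt, hE2]
end
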